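/- Full computational invariance theorem for an RMSNorm transformer: consider the forward pass X ← Norm(W_embd[s,:]); for ℓ = 1..L, Z ← σ_ℓ(XW_in^ℓ + 𝟙(b_in^ℓ)ᵀ)W_out^ℓ + 𝟙(b_out^ℓ)ᵀ, X ← Norm(X + Z); output XW_head + 𝟙b_headᵀ, where Norm divides each row by its norm. If all weights are replaced by W̃_embd = W_embd Q, W̃_in^ℓ = QᵀW_in^ℓ, W̃_out^ℓ = W_out^ℓ Q, b̃_out^ℓ = Qᵀb_out^ℓ, W̃_head = QᵀW_head (with b_in, b_head unchanged) for an orthogonal Q, then the output of the transformed network equals the output of the original network (assuming all normalized rows are nonzero). -/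
import Mathlib


open Matrix

/-- The Euclidean norm of a vector. -/
noncomputable def vnorm {D : ℕ} (x : Fin D → ℝ) : ℝ :=
  Real.sqrt (∑ i, x i ^ 2)

/-- RMSNorm: divide each row of a matrix by its Euclidean norm. -/
noncomputable def rmsNorm {N D : ℕ} (X : Matrix (Fin N) (Fin D) ℝ) :
    Matrix (Fin N) (Fin D) ℝ :=
  Matrix.of fun i j => X i j / vnorm (X i)

/-- The matrix `𝟙bᵀ` broadcasting a bias row vector `b` to `N` rows. -/
def biasRow (N : ℕ) {D : ℕ} (b : Fin D → ℝ) : Matrix (Fin N) (Fin D) ℝ :=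
  Matrix.of fun _ j => b j

/-- A transformer block: `X ↦ σ(XW_in + 𝟙b_inᵀ)W_out + 𝟙b_outᵀ`. -/
noncomputable def blockOut {N D Dh : ℕ}
    (σ : Matrix (Fin N) (Fin Dh) ℝ → Matrix (Fin N) (Fin Dh) ℝ)
    (Win : Matrix (Fin D) (Fin Dh) ℝ) (bin : Fin Dh → ℝ)
    (Wout : Matrix (Fin Dh) (Fin D) ℝ) (bout : Fin D → ℝ)
    (X : Matrix (Fin N) (Fin D) ℝ) : Matrix (Fin N) (Fin D) ℝ :=
  σ (X * Win + biasRow N bin) * Wout + biasRow N bout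

/-- The sequence of normalized residual signals of the forward pass:
`X ← Norm(X₀)`, then for `ℓ = 1..L`, `X ← Norm(X + block_ℓ(X))`. -/
noncomputable def states {L N D : ℕ} {Dh : Fin L → ℕ}
    (σ : ∀ ℓ : Fin L, Matrix (Fin N) (Fin (Dh ℓ)) ℝ → Matrix (Fin N) (Fin (Dh ℓ)) ℝ)
    (Win : ∀ ℓ : Fin L, Matrix (Fin D) (Fin (Dh ℓ)) ℝ)
    (bin : ∀ ℓ : Fin L, Fin (Dh ℓ) → ℝ)
    (Wout : ∀ ℓ : Fin L, Matrix (Fin (Dh ℓ)) (Fin D) ℝ)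
    (bout : ∀ ℓ : Fin L, Fin D → ℝ)
    (X0 : Matrix (Fin N) (Fin D) ℝ) : ℕ → Matrix (Fin N) (Fin D) ℝ
  | 0 => rmsNorm X0
  | k + 1 =>
    if h : k < L then
      rmsNorm (states σ Win bin Wout bout X0 k +
        blockOut (σ ⟨k, h⟩) (Win ⟨k, h⟩) (bin ⟨k, h⟩) (Wout ⟨k, h⟩) (bout ⟨k, h⟩)
          (states σ Win bin Wout bout X0 k))
    else states σ Win bin Wout bout X0 k


lemma vnorm_vecMul {D : ℕ} (Q : Matrix (Fin D) (Fin D) ℝ) (hQ2 : Q * Qᵀ = 1)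
    (x : Fin D → ℝ) : vnorm (Matrix.vecMul x Q) = vnorm x := by
  unfold vnorm
  congr 1
  have : ∀ j, (Matrix.vecMul x Q j) ^ 2 = (∑ k, x k * Q k j) * (∑ l, x l * Q l j) := by
    intro j; rw [sq]; rfl
  simp only [this, Finset.sum_mul_sum]
  rw [Finset.sum_comm]
  have h : ∀ k l, ∑ j, Q k j * Q l j = if k = l then 1 else 0 := by
    intro k l
    have := congrFun (congrFun hQ2 k) l
    simpa [Matrix.mul_apply, Matrix.one_apply] using this
  calc ∑ k, ∑ j, ∑ l, x k * Q k j * (x l * Q l j)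
      = ∑ k, ∑ l, ∑ j, x k * x l * (Q k j * Q l j) := by
        refine Finset.sum_congr rfl fun k _ => ?_
        rw [Finset.sum_comm]
        exact Finset.sum_congr rfl fun l _ =>
          Finset.sum_congr rfl fun j _ => by ring
    _ = ∑ k, ∑ l, x k * x l * ∑ j, Q k j * Q l j := by
        simp [Finset.mul_sum]
    _ = ∑ k, x k ^ 2 := by
        simp only [h]
        simp [Finset.sum_ite_eq, sq]

lemma rmsNorm_mul_orth {N D : ℕ} (X : Matrix (Fin N) (Fin D) ℝ)
    (Q : Matrix (Fin D) (Fin D) ℝ) (hQ2 : Q * Qᵀ = 1) :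
    rmsNorm (X * Q) = rmsNorm X * Q := by
  ext i j
  have hrow : (X * Q) i = Matrix.vecMul (X i) Q := by
    funext j; simp [Matrix.mul_apply, Matrix.vecMul, dotProduct]
  have hv : vnorm ((X * Q) i) = vnorm (X i) := by rw [hrow, vnorm_vecMul Q hQ2]
  simp only [rmsNorm, Matrix.mul_apply, Matrix.of_apply, hv]
  rw [Finset.sum_div]
  exact Finset.sum_congr rfl fun k _ => by ring

lemma biasRow_mul {N D : ℕ} (b : Fin D → ℝ) (Q : Matrix (Fin D) (Fin D) ℝ) :
    biasRow N (Qᵀ.mulVec b) = biasRow N b * Q := by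
  ext i j
  simp [biasRow, Matrix.mul_apply, Matrix.mulVec, dotProduct,
    Matrix.transpose_apply, mul_comm]

lemma blockOut_orth {N D Dh : ℕ}
    (σ : Matrix (Fin N) (Fin Dh) ℝ → Matrix (Fin N) (Fin Dh) ℝ)
    (Win : Matrix (Fin D) (Fin Dh) ℝ) (bin : Fin Dh → ℝ)
    (Wout : Matrix (Fin Dh) (Fin D) ℝ) (bout : Fin D → ℝ)
    (X : Matrix (Fin N) (Fin D) ℝ)
    (Q : Matrix (Fin D) (Fin D) ℝ) (hQ2 : Q * Qᵀ = 1) :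
    blockOut σ (Qᵀ * Win) bin (Wout * Q) (Qᵀ.mulVec bout) (X * Q) =
      blockOut σ Win bin Wout bout X * Q := by
  unfold blockOut
  have h1 : X * Q * (Qᵀ * Win) = X * Win := by
    rw [Matrix.mul_assoc, ← Matrix.mul_assoc Q, hQ2, Matrix.one_mul]
  rw [h1, biasRow_mul, Matrix.add_mul, ← Matrix.mul_assoc]

/-- **Full computational invariance for an RMSNorm transformer.** Replacing the weights by
`W̃_embd = W_embd Q`, `W̃_in^ℓ = QᵀW_in^ℓ`, `W̃_out^ℓ = W_out^ℓ Q`, `b̃_out^ℓ = Qᵀb_out^ℓ`,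
`W̃_head = QᵀW_head` (with `b_in`, `b_head` unchanged) for an orthogonal `Q` leaves the
output of the network unchanged, assuming all rows being normalized are nonzero. -/
theorem computational_invariance {L N D V Vo : ℕ} {Dh : Fin L → ℕ}
    (σ : ∀ ℓ : Fin L, Matrix (Fin N) (Fin (Dh ℓ)) ℝ → Matrix (Fin N) (Fin (Dh ℓ)) ℝ)
    (Win : ∀ ℓ : Fin L, Matrix (Fin D) (Fin (Dh ℓ)) ℝ)
    (bin : ∀ ℓ : Fin L, Fin (Dh ℓ) → ℝ)
    (Wout : ∀ ℓ : Fin L, Matrix (Fin (Dh ℓ)) (Fin D) ℝ)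
    (bout : ∀ ℓ : Fin L, Fin D → ℝ)
    (Wembd : Matrix (Fin V) (Fin D) ℝ) (s : Fin N → Fin V)
    (Whead : Matrix (Fin D) (Fin Vo) ℝ) (bhead : Fin Vo → ℝ)
    (Q : Matrix (Fin D) (Fin D) ℝ) (hQ1 : Qᵀ * Q = 1) (hQ2 : Q * Qᵀ = 1)
    -- the embedded signal and every pre-normalization signal has nonzero rows
    (hemb : ∀ i, (Matrix.of fun i j => Wembd (s i) j : Matrix (Fin N) (Fin D) ℝ) i ≠ 0)
    (hrows : ∀ (k : ℕ) (h : k < L) (i : Fin N),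
      (states σ Win bin Wout bout (Matrix.of fun i j => Wembd (s i) j) k +
        blockOut (σ ⟨k, h⟩) (Win ⟨k, h⟩) (bin ⟨k, h⟩) (Wout ⟨k, h⟩) (bout ⟨k, h⟩)
          (states σ Win bin Wout bout (Matrix.of fun i j => Wembd (s i) j) k)) i ≠ 0) :
    states σ (fun ℓ => Qᵀ * Win ℓ) bin (fun ℓ => Wout ℓ * Q)
        (fun ℓ => Qᵀ.mulVec (bout ℓ))
        (Matrix.of fun i j => (Wembd * Q) (s i) j) L * (Qᵀ * Whead) + biasRow N bhead =
      states σ Win bin Wout bout (Matrix.of fun i j => Wembd (s i) j) L * Whead +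
        biasRow N bhead := by

  have key : ∀ k : ℕ,
      states σ (fun ℓ => Qᵀ * Win ℓ) bin (fun ℓ => Wout ℓ * Q)
        (fun ℓ => Qᵀ.mulVec (bout ℓ))
        (Matrix.of fun i j => (Wembd * Q) (s i) j) k =
      states σ Win bin Wout bout (Matrix.of fun i j => Wembd (s i) j) k * Q := by
    intro k
    induction k with
    | zero =>
      show rmsNorm _ = rmsNorm _ * Q
      have h0 : (Matrix.of fun i j => (Wembd * Q) (s i) j) =
          (Matrix.of fun i j => Wembd (s i) j : Matrix (Fin N) (Fin D) ℝ) * Q := by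
        ext i j
        simp [Matrix.mul_apply]
      rw [h0, rmsNorm_mul_orth _ Q hQ2]
    | succ k ih =>
      by_cases h : k < L
      · simp only [states, dif_pos h, ih]
        rw [← rmsNorm_mul_orth _ Q hQ2, Matrix.add_mul,
          blockOut_orth _ _ _ _ _ _ Q hQ2]
      · simp only [states, dif_neg h, ih]
  rw [key L, Matrix.mul_assoc, ← Matrix.mul_assoc Q, hQ2, Matrix.one_mul]
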